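/- arXiv:2308.06336 — 3 statements merged into one kernel-verified Lean document; each statement's English description precedes it below -/
import Mathlib

section
/- Let f: Γ → Σ be a bundle scenario, p an empirical model on f, and π: Σ' → ĤNΣ a simplicial complex map; let l: π*(ĤNΓ) → ĤNΓ and f^π: π*(ĤNΓ) → Σ' be the pullback projections of ĤNf along π. Then the family (π_*p)_{σ'}(γ') := (ĤNp)_{π(σ')}(l(γ')) for σ' ∈ Σ' and γ' ∈ (f^π)⁻¹(σ') is an empirical model on the bundle scenario f^π. Moreover, for any further simplicial complex map π': Σ'' → ĤNΣ', under the canonical identification of (π ⋄ π')*(ĤNΓ) with (π')*(ĤN(π*(ĤNΓ))), one has (π ⋄ π')_* p = π'_*(π_* p), where π ⋄ π' := μ_Σ ∘ ĤNπ ∘ π'. -/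
universe u v w t

namespace Ctx

/-- An abstract simplicial complex on the vertex type `V`: a collection of
nonempty finite subsets of `V` (the simplices/faces), closed under passing to
nonempty subsets, and containing every singleton (so that `V` is exactly the
vertex set). -/
structure SComplex (V : Type u) where
  faces : Set (Set V)
  finite_mem : ∀ σ ∈ faces, Set.Finite σ
  nonempty_mem : ∀ σ ∈ faces, Set.Nonempty σ
  down_closed : ∀ ⦃σ⦄, σ ∈ faces → ∀ ⦃τ⦄, τ ⊆ σ → τ.Nonempty → τ ∈ faces
  singleton_mem : ∀ x : V, {x} ∈ faces

namespace SComplex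

variable {V : Type u} {W : Type v} {V' : Type w} {V'' : Type t}

/-- A map of simplicial complexes: a function on vertices carrying every
simplex (elementwise image) to a simplex. -/
@[ext]
structure Map (Γ : SComplex V) (K : SComplex W) where
  toFun : V → W
  map_faces : ∀ ⦃σ⦄, σ ∈ Γ.faces → toFun '' σ ∈ K.faces

variable {Γ : SComplex V} {K : SComplex W} {K' : SComplex V'}

/-- The identity simplicial complex map. -/
protected def Map.id (K : SComplex V) : Map K K :=
  ⟨fun x => x, fun σ h => by simpa using h⟩

/-- Composition of simplicial complex maps. -/
def Map.comp {L : SComplex V'} (g : Map K L) (f : Map Γ K) : Map Γ L :=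
  ⟨g.toFun ∘ f.toFun, fun σ h => by
    rw [Set.image_comp]; exact g.map_faces (f.map_faces h)⟩

/-- The star of a simplex: all simplices containing it. -/
def star (K : SComplex V) (σ : Set V) : Set (Set V) := {τ | τ ∈ K.faces ∧ σ ⊆ τ}

/-- Surjectivity: every simplex of the target is an image of a simplex. -/
def Map.Surj (f : Map Γ K) : Prop := ∀ σ ∈ K.faces, ∃ γ ∈ Γ.faces, f.toFun '' γ = σ

/-- Local surjectivity: stars surject onto stars. -/
def Map.LocSurj (f : Map Γ K) : Prop :=
  ∀ γ ∈ Γ.faces, ∀ τ ∈ K.star (f.toFun '' γ), ∃ γ' ∈ Γ.star γ, f.toFun '' γ' = τ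

/-- Discreteness over vertices: no edge between distinct vertices with the
same image. -/
def Map.DiscV (f : Map Γ K) : Prop :=
  ∀ x y : V, x ≠ y → f.toFun x = f.toFun y → ({x, y} : Set V) ∉ Γ.faces

/-- A bundle scenario: a surjective, locally surjective simplicial complex map
that is discrete over vertices. -/
def Map.IsBundle (f : Map Γ K) : Prop := f.Surj ∧ f.LocSurj ∧ f.DiscV

/-- `f` has the right lifting property with respect to `g`. -/
def RLP {A : Type*} {B : Type*} {CA : SComplex A} {CB : SComplex B}
    (g : Map CA CB) (f : Map Γ K) : Prop :=
  ∀ (u : Map CA Γ) (v : Map CB K), f.comp u = v.comp g →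
    ∃ h : Map CB Γ, h.comp g = u ∧ f.comp h = v

/-- The full simplicial complex `Δ^n` on `{0, …, n}`. -/
def deltaC (n : ℕ) : SComplex (Fin (n + 1)) where
  faces := {σ | σ.Nonempty}
  finite_mem := fun σ _ => σ.toFinite
  nonempty_mem := fun _ h => h
  down_closed := fun _ _ _ _ h => h
  singleton_mem := fun x => Set.singleton_nonempty x

/-- The simplicial complex map `Δ^m → Δ^n` induced by a function
`{0,…,m} → {0,…,n}`. -/
def deltaMap {m n : ℕ} (θ : Fin (m + 1) → Fin (n + 1)) : Map (deltaC m) (deltaC n) :=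
  ⟨θ, fun _ h => h.image θ⟩

/-- The empty simplicial complex. -/
def emptyC : SComplex Empty where
  faces := ∅
  finite_mem := fun _ h => h.elim
  nonempty_mem := fun _ h => h.elim
  down_closed := fun _ h => h.elim
  singleton_mem := fun x => x.elim

/-- The inclusion of the empty simplicial complex into `Δ^n`. -/
def emptyToDelta (n : ℕ) : Map emptyC (deltaC n) :=
  ⟨fun x => x.elim, fun _ h => h.elim⟩

/-- The type of faces of a simplicial complex. -/
abbrev Face (K : SComplex V) : Type u := {σ : Set V // σ ∈ K.faces}

/-- The nerve complex `ĤN K`: vertices are the simplices of `K`, and a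
nonempty finite set of simplices is a face iff its union is a face of `K`. -/
def nerveC (K : SComplex V) : SComplex K.Face where
  faces := {τ | τ.Finite ∧ τ.Nonempty ∧ (⋃ σ ∈ τ, (σ : Set V)) ∈ K.faces}
  finite_mem := fun _ h => h.1
  nonempty_mem := fun _ h => h.2.1
  down_closed := by
    intro τ h τ' hsub hne
    refine ⟨h.1.subset hsub, hne, K.down_closed h.2.2 ?_ ?_⟩
    · exact Set.biUnion_subset_biUnion_left hsub
    · obtain ⟨σ, hσ⟩ := hne
      obtain ⟨x, hx⟩ := K.nonempty_mem σ.1 σ.2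
      exact ⟨x, Set.mem_biUnion hσ hx⟩
  singleton_mem := fun σ => ⟨Set.finite_singleton σ, Set.singleton_nonempty σ, by
    simpa using σ.2⟩

/-- The map `ĤN f` induced on nerve complexes. -/
def nerveMap (f : Map Γ K) : Map (nerveC Γ) (nerveC K) where
  toFun γ := ⟨f.toFun '' γ.1, f.map_faces γ.2⟩
  map_faces := by
    intro τ hτ
    refine ⟨hτ.1.image _, hτ.2.1.image _, ?_⟩
    have h : (⋃ σ ∈ (fun γ : Γ.Face => (⟨f.toFun '' γ.1, f.map_faces γ.2⟩ : K.Face)) '' τ,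
        (σ : Set W)) = f.toFun '' (⋃ σ ∈ τ, (σ : Set V)) := by
      rw [Set.biUnion_image, Set.image_iUnion₂]
    exact Set.mem_of_eq_of_mem h (f.map_faces hτ.2.2)

/-- The unit `δ : K → ĤN K`, sending a vertex to the singleton simplex. -/
def deltaHat (K : SComplex V) : Map K (nerveC K) where
  toFun x := ⟨{x}, K.singleton_mem x⟩
  map_faces := by
    intro σ hσ
    refine ⟨(K.finite_mem σ hσ).image _, (K.nonempty_mem σ hσ).image _, ?_⟩
    have h : (⋃ τ ∈ (fun x : V => (⟨{x}, K.singleton_mem x⟩ : K.Face)) '' σ,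
        (τ : Set V)) = σ := by
      rw [Set.biUnion_image]
      exact Set.biUnion_of_singleton σ
    exact Set.mem_of_eq_of_mem h hσ

/-- The multiplication `μ : ĤN (ĤN K) → ĤN K` of the nerve complex monad,
sending a set of simplices to its union. -/
def muMap (K : SComplex V) : Map (nerveC (nerveC K)) (nerveC K) where
  toFun τ := ⟨⋃ σ ∈ τ.1, (σ : Set V), τ.2.2.2⟩
  map_faces := by
    intro T hT
    refine ⟨hT.1.image _, hT.2.1.image _, ?_⟩
    have h : (⋃ σ ∈ (fun τ : (nerveC K).Face =>
          (⟨⋃ σ ∈ τ.1, (σ : Set V), τ.2.2.2⟩ : K.Face)) '' T, (σ : Set V))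
        = ⋃ σ ∈ (⋃ τ ∈ T, (τ : Set K.Face)), (σ : Set V) := by
      rw [Set.biUnion_image]
      ext x
      simp only [Set.mem_iUnion, Set.mem_setOf_eq]
      tauto
    exact Set.mem_of_eq_of_mem h hT.2.2.2.2

/-- The vertex type of the pull-back of `f : Γ → K` along `π : K' → K`. -/
def PB {Γ : SComplex V} {K : SComplex W} {K' : SComplex V'} (f : Map Γ K) (π : Map K' K) :
    Type (max u w) :=
  {q : V × V' // f.toFun q.1 = π.toFun q.2}

/-- The pull-back of `f : Γ → K` along `π : K' → K`: vertices are pairs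
`(x, y)` with `f x = π y`, and a set of pairs is a simplex iff both coordinate
projections are simplices. -/
def pullback {Γ : SComplex V} {K : SComplex W} {K' : SComplex V'} (f : Map Γ K) (π : Map K' K) :
    SComplex (PB f π) where
  faces := {τ | ((fun q : PB f π => q.1.1) '' τ) ∈ Γ.faces ∧
    ((fun q : PB f π => q.1.2) '' τ) ∈ K'.faces}
  finite_mem := by
    intro τ h
    have h1 : (Subtype.val '' τ).Finite := by
      refine Set.Finite.subset (Set.Finite.prod (Γ.finite_mem _ h.1) (K'.finite_mem _ h.2)) ?_
      rintro q ⟨r, hr, rfl⟩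
      exact ⟨⟨r, hr, rfl⟩, ⟨r, hr, rfl⟩⟩
    exact Set.Finite.of_finite_image h1 Subtype.val_injective.injOn
  nonempty_mem := fun τ h => Set.Nonempty.of_image (Γ.nonempty_mem _ h.1)
  down_closed := fun τ h τ' hsub hne =>
    ⟨Γ.down_closed h.1 (Set.image_mono hsub) (hne.image _),
     K'.down_closed h.2 (Set.image_mono hsub) (hne.image _)⟩
  singleton_mem := fun q => by
    constructor
    · simpa using Γ.singleton_mem q.1.1
    · simpa using K'.singleton_mem q.1.2

/-- First projection of the pull-back. -/
def pbFst {Γ : SComplex V} {K : SComplex W} {K' : SComplex V'} (f : Map Γ K) (π : Map K' K) :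
    Map (pullback f π) Γ :=
  ⟨fun q => q.1.1, fun _ h => h.1⟩

/-- Second projection of the pull-back (the pulled-back bundle). -/
def pbSnd {Γ : SComplex V} {K : SComplex W} {K' : SComplex V'} (f : Map Γ K) (π : Map K' K) :
    Map (pullback f π) K' :=
  ⟨fun q => q.1.2, fun _ h => h.2⟩

/-- The event complex `E_O K` of a scenario `(K, O)`: vertices are pairs
`(x, o)` with `o ∈ O x`, and simplices are graphs of outcome assignments over
simplices of `K`. -/
def eventComplex (K : SComplex V) (O : V → Type v) : SComplex ((x : V) × O x) where
  faces := {τ | (Sigma.fst '' τ) ∈ K.faces ∧ Set.InjOn Sigma.fst τ}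
  finite_mem := fun _ h => Set.Finite.of_finite_image (K.finite_mem _ h.1) h.2
  nonempty_mem := fun _ h => Set.Nonempty.of_image (K.nonempty_mem _ h.1)
  down_closed := fun τ h τ' hsub hne =>
    ⟨K.down_closed h.1 (Set.image_mono hsub) (hne.image _), h.2.mono hsub⟩
  singleton_mem := fun p => ⟨by simpa using K.singleton_mem p.1, Set.injOn_singleton _ _⟩

/-- The canonical projection `E_O K → K` of a scenario. -/
def eventProj (K : SComplex V) (O : V → Type v) : Map (eventComplex K O) K :=
  ⟨Sigma.fst, fun _ h => h.1⟩

end SComplex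

open SComplex

/-- `R`-distributions on a set `U`: finitely supported `R`-valued functions
summing to `1`. -/
def Dist (R : Type u) [CommSemiring R] (U : Type v) : Type (max u v) :=
  {p : U →₀ R // p.sum (fun _ r => r) = 1}

/-- Push-forward of distributions along a function. -/
noncomputable def Dist.map {R : Type u} [CommSemiring R] {U : Type v} {U' : Type w} (g : U → U')
    (p : Dist R U) : Dist R U' :=
  ⟨Finsupp.mapDomain g p.1, by
    rw [Finsupp.sum_mapDomain_index (fun _ => rfl) (fun _ _ _ => rfl)]
    exact p.2⟩

/-- The Dirac distribution at a point. -/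
noncomputable def Dist.pure {R : Type u} [CommSemiring R] {U : Type v} (u : U) : Dist R U :=
  ⟨Finsupp.single u 1, by rw [Finsupp.sum_single_index rfl]⟩

namespace SComplex

/-- The fiber of a simplicial complex map over a simplex of the target. -/
abbrev Map.fiber {Γ : SComplex V} {K : SComplex W} (f : Map Γ K) (σ : Set W) : Type u :=
  {γ : Set V // γ ∈ Γ.faces ∧ f.toFun '' γ = σ}

/-- The restriction map between fibers, sending `γ` over `σ` to the
subsimplex of `γ` lying over `σ' ⊆ σ`.  (For bundle scenarios this is the
unique such subsimplex.) -/
def Map.resFiber {Γ : SComplex V} {K : SComplex W} (f : Map Γ K) {σ σ' : Set W}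
    (hσ' : σ' ∈ K.faces) (h : σ' ⊆ σ) (γ : f.fiber σ) : f.fiber σ' := by
  have hne : ({y | y ∈ γ.1 ∧ f.toFun y ∈ σ'} : Set V).Nonempty := by
    obtain ⟨x, hx⟩ := K.nonempty_mem σ' hσ'
    have hx' : x ∈ f.toFun '' γ.1 := (Set.ext_iff.mp γ.2.2 x).mpr (h hx)
    obtain ⟨y, hy, rfl⟩ := hx'
    exact ⟨y, hy, hx⟩
  refine ⟨{y | y ∈ γ.1 ∧ f.toFun y ∈ σ'},
    Γ.down_closed γ.2.1 (fun y hy => hy.1) hne, ?_⟩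
  ext x
  constructor
  · rintro ⟨y, ⟨hy, hfy⟩, rfl⟩
    exact hfy
  · intro hx
    have hx' : x ∈ f.toFun '' γ.1 := (Set.ext_iff.mp γ.2.2 x).mpr (h hx)
    obtain ⟨y, hy, rfl⟩ := hx'
    exact ⟨y, ⟨hy, hx⟩, rfl⟩

/-- An empirical model on a bundle scenario `f : Γ → K`: a compatible family
of distributions on the fibers of `f`. -/
structure EmpiricalModel (R : Type t) [CommSemiring R] {Γ : SComplex V} {K : SComplex W}
    (f : Map Γ K) where
  dist : ∀ σ, σ ∈ K.faces → Dist R (f.fiber σ)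
  compat : ∀ σ (hσ : σ ∈ K.faces) σ' (hσ' : σ' ∈ K.faces) (h : σ' ⊆ σ),
    Dist.map (f.resFiber hσ' h) (dist σ hσ) = dist σ' hσ'

/-- An empirical model on a scenario `(K, O)`: a compatible family of
distributions on joint outcome assignments over each measurement context. -/
structure ScenEmp (R : Type t) [CommSemiring R] (K : SComplex V) (O : V → Type v) where
  dist : ∀ σ, σ ∈ K.faces → Dist R (∀ x : σ, O x.1)
  compat : ∀ σ (hσ : σ ∈ K.faces) σ' (hσ' : σ' ∈ K.faces) (h : σ' ⊆ σ),
    Dist.map (fun (s : ∀ x : σ, O x.1) (x : σ') => s ⟨x.1, h x.2⟩) (dist σ hσ) = dist σ' hσ'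

end SComplex

namespace SComplex

variable {V : Type u} {W : Type v} {V' : Type w}


/-- The defining property of the push-forward `π_* p` of an empirical model
`p` on `f` along a simplicial relation `π : K' → ĤN K` (a simplicial complex
map into the nerve complex): over a simplex `σ'` of `K'`, the value at a fiber
element `γ'` of the pulled-back bundle is the value of `p` over the union
`π̄(σ')` at the union of the first components of `γ'`. -/
def piPushSpec {Γ : SComplex V} {K : SComplex W} {K' : SComplex V'}
    (f : Map Γ K) (π : Map K' (nerveC K)) {R : Type t} [CommSemiring R]
    (p : EmpiricalModel R f) (q : EmpiricalModel R (pbSnd (nerveMap f) π)) : Prop :=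
  ∀ σ' (hσ' : σ' ∈ K'.faces) (γ' : (pbSnd (nerveMap f) π).fiber σ')
    (hu : (⋃ x' ∈ σ', ((π.toFun x' : K.Face) : Set W)) ∈ K.faces)
    (γ : f.fiber (⋃ x' ∈ σ', ((π.toFun x' : K.Face) : Set W))),
    (γ : Set V) = (⋃ r ∈ γ'.1, ((r.1.1 : Γ.Face) : Set V)) →
    (q.dist σ' hσ').1 γ' = (p.dist _ hu).1 γ

/-- The fiber element of the event bundle given by the graph of an outcome
assignment `s` over a simplex `σ`. -/
def graphFiber (K : SComplex V) (O : V → Type v) {σ : Set V} (hσ : σ ∈ K.faces)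
    (s : ∀ x : σ, O x.1) : (eventProj K O).fiber σ := by
  refine ⟨{p : (x : V) × O x | ∃ h : p.1 ∈ σ, p.2 = s ⟨p.1, h⟩}, ⟨?_, ?_⟩, ?_⟩
  · have h : Sigma.fst '' {p : (x : V) × O x | ∃ h : p.1 ∈ σ, p.2 = s ⟨p.1, h⟩} = σ := by
      ext x
      constructor
      · rintro ⟨p, ⟨hp, _⟩, rfl⟩; exact hp
      · intro hx; exact ⟨⟨x, s ⟨x, hx⟩⟩, ⟨hx, rfl⟩, rfl⟩
    exact Set.mem_of_eq_of_mem h hσ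
  · rintro ⟨x₁, o₁⟩ ⟨h₁, ho₁⟩ ⟨x₂, o₂⟩ ⟨h₂, ho₂⟩ hx
    obtain rfl : x₁ = x₂ := hx
    exact congrArg (Sigma.mk x₁) (ho₁.trans ho₂.symm)
  · ext x
    constructor
    · rintro ⟨p, ⟨hp, _⟩, rfl⟩; exact hp
    · intro hx; exact ⟨⟨x, s ⟨x, hx⟩⟩, ⟨hx, rfl⟩, rfl⟩

/-- Push-forward of a fiber element along a map over the base. -/
def pushFiber {Γ : SComplex V} {Γ' : SComplex V'} {K : SComplex W}
    (f : Map Γ K) (g : Map Γ' K) (α : Map Γ Γ') (hc : g.comp α = f) (σ : Set W)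
    (γ : f.fiber σ) : g.fiber σ := by
  refine ⟨α.toFun '' γ.1, α.map_faces γ.2.1, ?_⟩
  rw [← Set.image_comp]
  have h : g.toFun ∘ α.toFun = f.toFun := congrArg Map.toFun hc
  rw [h]
  exact γ.2.2

/-- Sections of a bundle scenario. -/
def BSection {Γ : SComplex V} {K : SComplex W} (f : Map Γ K) : Type _ :=
  {s : Map K Γ // f.comp s = Map.id K}

/-- Evaluation of a section of a bundle scenario at a simplex of the base,
giving an element of the fiber. -/
def BSection.ev {Γ : SComplex V} {K : SComplex W} (f : Map Γ K) (σ : Set W)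
    (hσ : σ ∈ K.faces) (s : BSection f) : f.fiber σ := by
  refine ⟨s.1.toFun '' σ, s.1.map_faces hσ, ?_⟩
  rw [← Set.image_comp]
  have h : f.toFun ∘ s.1.toFun = fun x => x := congrArg Map.toFun s.2
  rw [h, Set.image_id']

/-- Noncontextuality of an empirical model on a bundle scenario: it is a
mixture of deterministic models coming from sections. -/
def BundleNC (R : Type t) [CommSemiring R] {Γ : SComplex V} {K : SComplex W}
    (f : Map Γ K) (p : EmpiricalModel R f) : Prop :=
  ∃ d : Dist R (BSection f), ∀ σ (hσ : σ ∈ K.faces),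
    p.dist σ hσ = Dist.map (BSection.ev f σ hσ) d

/-- Noncontextuality of an empirical model on a scenario `(K, O)`: it is a
mixture of deterministic models coming from global outcome assignments. -/
def ScenNC (R : Type t) [CommSemiring R] (K : SComplex V) (O : V → Type v)
    (e : ScenEmp R K O) : Prop :=
  ∃ d : Dist R (∀ x : V, O x), ∀ σ (hσ : σ ∈ K.faces),
    e.dist σ hσ = Dist.map (fun (g : ∀ x : V, O x) (x : σ) => g x.1) d

end SComplex

end Ctx

namespace Ctx
open SComplex

/-!
A fiber element of the pulled-back bundle `π*(ĤN Γ) → K'` over `σ'` is a family of simplices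
`δ_{x'}` of `Γ`, `x' ∈ σ'`, with `f δ_{x'} = π x'` and union `γ` a simplex lying over
`μ_K (π σ')`. Since `f` is discrete over vertices, `δ_{x'}` must be the restriction
`γ|_{π x'}`; hence taking unions is a bijection onto the fiber of `f` over `μ_K (π σ')`, it
commutes with restriction, and `π_* p` is `p` transported along it. Kleisli compatibility
then reduces to `μ_K (π ⋄ π') σ'' = μ_K (π (μ_{K'} (π' σ'')))` and to the equality of the
total unions of the two identified fiber elements.
-/

theorem Dist.map_map {R : Type*} [CommSemiring R] {U₁ U₂ U₃ : Type*}
    (g : U₂ → U₃) (h : U₁ → U₂) (p : Dist R U₁) :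
    Dist.map g (Dist.map h p) = Dist.map (g ∘ h) p :=
  Subtype.ext Finsupp.mapDomain_comp.symm

theorem Dist.map_apply_of_injective {R : Type*} [CommSemiring R] {U₁ U₂ : Type*}
    {g : U₁ → U₂} (hg : Function.Injective g) (p : Dist R U₁) (u : U₁) :
    (Dist.map g p).1 (g u) = p.1 u :=
  Finsupp.mapDomain_apply hg _ _

namespace SComplex

variable {V : Type u} {W : Type v} {V' : Type w}
variable {Γ : SComplex V} {K : SComplex W} {K' : SComplex V'}

theorem Map.DiscV.injOn {f : Map Γ K} (hd : f.DiscV) {γ : Set V} (hγ : γ ∈ Γ.faces) :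
    Set.InjOn f.toFun γ := by
  intro x hx y hy hxy
  by_contra hne
  refine hd x y hne hxy (Γ.down_closed hγ ?_ (Set.insert_nonempty x {y}))
  rintro z (rfl | rfl)
  · exact hx
  · exact hy

theorem Map.DiscV.eq_sep_of_subset {f : Map Γ K} (hd : f.DiscV) {γ δ : Set V}
    (hγ : γ ∈ Γ.faces) (hδγ : δ ⊆ γ) {σ : Set W} (hδ : f.toFun '' δ = σ) :
    δ = {y | y ∈ γ ∧ f.toFun y ∈ σ} := by
  subst hδ
  ext y
  refine ⟨fun hy => ⟨hδγ hy, y, hy, rfl⟩, ?_⟩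
  rintro ⟨hyγ, z, hz, hzy⟩
  rwa [← hd.injOn hγ (hδγ hz) hyγ hzy]

theorem EmpiricalModel.dist_apply_congr {R : Type*} [CommSemiring R] {f : Map Γ K}
    (p : EmpiricalModel R f) {σ τ : Set W} (h : σ = τ) (hσ : σ ∈ K.faces)
    (hτ : τ ∈ K.faces) {γ : f.fiber σ} {δ : f.fiber τ} (hγδ : γ.1 = δ.1) :
    (p.dist σ hσ).1 γ = (p.dist τ hτ).1 δ := by
  subst h
  obtain rfl : γ = δ := Subtype.ext hγδ
  rfl

theorem Map.fiber.apply_mem {g : Map Γ K} {σ : Set W} (τ : g.fiber σ) {z : V} (hz : z ∈ τ.1) :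
    g.toFun z ∈ σ :=
  τ.2.2 ▸ Set.mem_image_of_mem _ hz

theorem Map.fiber.exists_apply_eq {g : Map Γ K} {σ : Set W} (τ : g.fiber σ) {x : W}
    (hx : x ∈ σ) : ∃ z ∈ τ.1, g.toFun z = x :=
  (τ.2.2.symm ▸ hx : x ∈ g.toFun '' τ.1)

theorem PB.ext {f : Map Γ K} {π : Map K' K} {z w : PB f π} (h₁ : z.1.1 = w.1.1)
    (h₂ : z.1.2 = w.1.2) : z = w :=
  Subtype.ext (Prod.ext h₁ h₂)

theorem PB.image_fst {f : Map Γ K} {π : Map K' (nerveC K)} (z : PB (nerveMap f) π) :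
    f.toFun '' (z.1.1 : Set V) = π.toFun z.1.2 :=
  congrArg Subtype.val z.2

/-- The simplex `μ_K (π σ')` of `K`. -/
def Map.unionImage (π : Map K' (nerveC K)) (σ' : Set V') : Set W :=
  ⋃ x' ∈ σ', ((π.toFun x' : K.Face) : Set W)

theorem Map.unionImage_mem (π : Map K' (nerveC K)) {σ' : Set V'} (hσ' : σ' ∈ K'.faces) :
    π.unionImage σ' ∈ K.faces := by
  have h := (π.map_faces hσ').2.2
  rwa [Set.biUnion_image] at h

theorem Map.subset_unionImage (π : Map K' (nerveC K)) {σ' : Set V'} {x' : V'}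
    (hx' : x' ∈ σ') : (π.toFun x' : Set W) ⊆ π.unionImage σ' :=
  Set.subset_biUnion_of_mem (u := fun y => ((π.toFun y : K.Face) : Set W)) hx'

theorem Map.unionImage_mono (π : Map K' (nerveC K)) {σ₁ σ₂ : Set V'} (h : σ₁ ⊆ σ₂) :
    π.unionImage σ₁ ⊆ π.unionImage σ₂ :=
  Set.biUnion_subset_biUnion_left h

theorem Map.unionImage_kleisli {V'' : Type*} {K'' : SComplex V''}
    (π : Map K' (nerveC K)) (π' : Map K'' (nerveC K')) (σ'' : Set V'') :
    ((muMap K).comp ((nerveMap π).comp π')).unionImage σ'' =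
      π.unionImage (π'.unionImage σ'') := by
  simp only [Map.unionImage, Map.comp, muMap, nerveMap, Function.comp_apply,
    Set.biUnion_image, Set.biUnion_iUnion]

section PulledBackFiber

variable (f : Map Γ K) (π : Map K' (nerveC K)) {σ' : Set V'}

/-- The map `μ_Γ ∘ l` on fibers of the pulled-back bundle. -/
def fiberUnion (τ : (pbSnd (nerveMap f) π).fiber σ') : f.fiber (π.unionImage σ') := by
  refine ⟨⋃ z ∈ τ.1, (z.1.1 : Set V), ?_, ?_⟩
  · have h := τ.2.1.1.2.2
    rwa [Set.biUnion_image] at h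
  · rw [Set.image_iUnion₂]
    refine Set.Subset.antisymm (Set.iUnion₂_subset fun z hz => ?_)
      (Set.iUnion₂_subset fun x' hx' => ?_)
    · rw [PB.image_fst]
      exact π.subset_unionImage (Map.fiber.apply_mem τ hz)
    · obtain ⟨z, hz, rfl⟩ := Map.fiber.exists_apply_eq τ hx'
      exact (PB.image_fst z).ge.trans (Set.subset_biUnion_of_mem
        (u := fun z : PB (nerveMap f) π => f.toFun '' (z.1.1 : Set V)) hz)

theorem fiberUnion_coe (τ : (pbSnd (nerveMap f) π).fiber σ') :
    (fiberUnion f π τ).1 = ⋃ z ∈ τ.1, (z.1.1 : Set V) :=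
  rfl

/-- The vertices `(γ|_{π x'}, x')`, `x' ∈ σ'`, of the pull-back lying over `γ`. -/
def liftSet (σ' : Set V') (γ : Set V) : Set (PB (nerveMap f) π) :=
  {z | z.1.2 ∈ σ' ∧ (z.1.1 : Set V) = {y | y ∈ γ ∧ f.toFun y ∈ (π.toFun z.1.2 : Set W)}}

theorem liftSet_injOn_snd (σ' : Set V') (γ : Set V) :
    Set.InjOn (pbSnd (nerveMap f) π).toFun (liftSet f π σ' γ) := by
  intro z hz w hw h
  have h' : z.1.2 = w.1.2 := h
  exact PB.ext (Subtype.ext (by rw [hz.2, hw.2, h'])) h'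

def liftVertex (γ : f.fiber (π.unionImage σ')) {x' : V'} (hx' : x' ∈ σ') :
    PB (nerveMap f) π :=
  let δ := f.resFiber (π.toFun x').2 (π.subset_unionImage hx') γ
  ⟨(⟨δ.1, δ.2.1⟩, x'), Subtype.ext δ.2.2⟩

theorem liftVertex_mem (γ : f.fiber (π.unionImage σ')) {x' : V'} (hx' : x' ∈ σ') :
    liftVertex f π γ hx' ∈ liftSet f π σ' γ.1 :=
  ⟨hx', rfl⟩

theorem snd_image_liftSet (γ : f.fiber (π.unionImage σ')) :
    (pbSnd (nerveMap f) π).toFun '' liftSet f π σ' γ.1 = σ' :=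
  Set.Subset.antisymm (Set.image_subset_iff.mpr fun _ hz => hz.1)
    fun _ hx' => ⟨liftVertex f π γ hx', liftVertex_mem f π γ hx', rfl⟩

theorem biUnion_liftSet (γ : f.fiber (π.unionImage σ')) :
    (⋃ z ∈ liftSet f π σ' γ.1, (z.1.1 : Set V)) = γ.1 := by
  refine Set.Subset.antisymm (Set.iUnion₂_subset fun z hz y hy => ?_) fun y hy => ?_
  · rw [hz.2] at hy
    exact hy.1
  · have hfy : f.toFun y ∈ π.unionImage σ' := γ.2.2 ▸ Set.mem_image_of_mem _ hy
    obtain ⟨x', hx', hfy'⟩ := Set.mem_iUnion₂.mp hfy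
    exact Set.mem_iUnion₂.mpr ⟨liftVertex f π γ hx', liftVertex_mem f π γ hx', hy, hfy'⟩

def liftFiber (hσ' : σ' ∈ K'.faces) (γ : f.fiber (π.unionImage σ')) :
    (pbSnd (nerveMap f) π).fiber σ' := by
  have hsnd := snd_image_liftSet f π γ
  have hfin : (liftSet f π σ' γ.1).Finite := by
    refine Set.Finite.of_finite_image ?_ (liftSet_injOn_snd f π σ' γ.1)
    rw [hsnd]
    exact K'.finite_mem σ' hσ'
  have hne : (liftSet f π σ' γ.1).Nonempty := by
    refine Set.Nonempty.of_image (f := (pbSnd (nerveMap f) π).toFun) ?_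
    rw [hsnd]
    exact K'.nonempty_mem σ' hσ'
  refine ⟨liftSet f π σ' γ.1, ⟨⟨hfin.image _, hne.image _, ?_⟩, ?_⟩, hsnd⟩
  · rw [Set.biUnion_image, biUnion_liftSet f π γ]
    exact γ.2.1
  · rw [← hsnd] at hσ'
    exact hσ'

theorem fiberUnion_liftFiber (hσ' : σ' ∈ K'.faces) (γ : f.fiber (π.unionImage σ')) :
    fiberUnion f π (liftFiber f π hσ' γ) = γ :=
  Subtype.ext (biUnion_liftSet f π γ)

theorem liftFiber_injective (hσ' : σ' ∈ K'.faces) :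
    Function.Injective (liftFiber f π hσ') :=
  Function.LeftInverse.injective (g := fiberUnion f π) (fiberUnion_liftFiber f π hσ')

/-- Discreteness forces each vertex `(δ, x')` of `τ` to be `(γ|_{π x'}, x')`. -/
theorem liftFiber_fiberUnion (hd : f.DiscV) (hσ' : σ' ∈ K'.faces)
    (τ : (pbSnd (nerveMap f) π).fiber σ') :
    liftFiber f π hσ' (fiberUnion f π τ) = τ := by
  have hτ : ∀ z ∈ τ.1, z ∈ liftSet f π σ' (fiberUnion f π τ).1 := fun z hz =>
    ⟨Map.fiber.apply_mem τ hz, hd.eq_sep_of_subset (fiberUnion f π τ).2.1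
      (Set.subset_biUnion_of_mem (u := fun z : PB (nerveMap f) π => (z.1.1 : Set V)) hz)
      (PB.image_fst z)⟩
  refine Subtype.ext (Set.Subset.antisymm (fun z hz => ?_) hτ)
  obtain ⟨w, hw, hwz⟩ := Map.fiber.exists_apply_eq τ hz.1
  have hwz' : w = z := liftSet_injOn_snd f π σ' _ (hτ w hw) hz hwz
  exact hwz' ▸ hw

theorem resFiber_liftFiber {σ₂ : Set V'} (hσ' : σ' ∈ K'.faces) (hσ₂ : σ₂ ∈ K'.faces)
    (h : σ₂ ⊆ σ') (γ : f.fiber (π.unionImage σ')) :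
    (pbSnd (nerveMap f) π).resFiber hσ₂ h (liftFiber f π hσ' γ) =
      liftFiber f π hσ₂ (f.resFiber (π.unionImage_mem hσ₂) (π.unionImage_mono h) γ) := by
  have hsep : ∀ {x'}, x' ∈ σ₂ → {y | y ∈ γ.1 ∧ f.toFun y ∈ (π.toFun x' : Set W)} =
      {y | (y ∈ γ.1 ∧ f.toFun y ∈ π.unionImage σ₂) ∧ f.toFun y ∈ (π.toFun x' : Set W)} :=
    fun hx' => Set.ext fun y =>
      ⟨fun hy => ⟨⟨hy.1, π.subset_unionImage hx' hy.2⟩, hy.2⟩, fun hy => ⟨hy.1.1, hy.2⟩⟩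
  refine Subtype.ext (Set.ext fun z => ?_)
  show (z ∈ liftSet f π σ' γ.1 ∧ z.1.2 ∈ σ₂) ↔ z ∈ liftSet f π σ₂ _
  exact ⟨fun ⟨⟨_, hz⟩, hz₂⟩ => ⟨hz₂, hz.trans (hsep hz₂)⟩,
    fun ⟨hz₂, hz⟩ => ⟨⟨h hz₂, hz.trans (hsep hz₂).symm⟩, hz₂⟩⟩

end PulledBackFiber

section Pushforward

variable {R : Type*} [CommSemiring R] {f : Map Γ K}

noncomputable def EmpiricalModel.pushforward (p : EmpiricalModel R f) (π : Map K' (nerveC K)) :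
    EmpiricalModel R (pbSnd (nerveMap f) π) where
  dist σ' hσ' := Dist.map (liftFiber f π hσ') (p.dist _ (π.unionImage_mem hσ'))
  compat σ' hσ' σ₂ hσ₂ h := by
    have hcomm : (pbSnd (nerveMap f) π).resFiber hσ₂ h ∘ liftFiber f π hσ' =
        liftFiber f π hσ₂ ∘ f.resFiber (π.unionImage_mem hσ₂) (π.unionImage_mono h) :=
      funext (resFiber_liftFiber f π hσ' hσ₂ h)
    rw [Dist.map_map, hcomm, ← Dist.map_map, p.compat _ _ _ _ (π.unionImage_mono h)]

theorem piPushSpec.dist_apply {π : Map K' (nerveC K)} {p : EmpiricalModel R f}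
    {q : EmpiricalModel R (pbSnd (nerveMap f) π)} (hq : piPushSpec f π p q) {σ' : Set V'}
    (hσ' : σ' ∈ K'.faces) (τ : (pbSnd (nerveMap f) π).fiber σ') :
    (q.dist σ' hσ').1 τ = (p.dist _ (π.unionImage_mem hσ')).1 (fiberUnion f π τ) :=
  hq σ' hσ' τ _ _ rfl

theorem piPushSpec_pushforward (hd : f.DiscV) (p : EmpiricalModel R f)
    (π : Map K' (nerveC K)) : piPushSpec f π p (p.pushforward π) := by
  intro σ' hσ' τ _ γ hγ
  obtain rfl : γ = fiberUnion f π τ := Subtype.ext hγ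
  conv_lhs => rw [← liftFiber_fiberUnion f π hd hσ' τ]
  exact Dist.map_apply_of_injective (liftFiber_injective f π hσ') _ _

end Pushforward

end SComplex

theorem statement_9_general {V : Type u} {W : Type v} {V' : Type w} {V'' : Type t}
    {Γ : SComplex V} {K : SComplex W} {K' : SComplex V'} {K'' : SComplex V''}
    (f : Map Γ K) (hf : f.IsBundle)
    (R : Type*) [CommSemiring R]
    (p : EmpiricalModel R f) (π : Map K' (nerveC K)) (π' : Map K'' (nerveC K')) :
    (∃ q : EmpiricalModel R (pbSnd (nerveMap f) π), piPushSpec f π p q) ∧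
    (∀ q : EmpiricalModel R (pbSnd (nerveMap f) π), piPushSpec f π p q →
      ∀ q2 : EmpiricalModel R (pbSnd (nerveMap f) ((muMap K).comp ((nerveMap π).comp π'))),
        piPushSpec f ((muMap K).comp ((nerveMap π).comp π')) p q2 →
      ∀ q3 : EmpiricalModel R (pbSnd (nerveMap (pbSnd (nerveMap f) π)) π'),
        piPushSpec (pbSnd (nerveMap f) π) π' q q3 →
      ∀ σ'' (hσ'' : σ'' ∈ K''.faces)
        (A : (pbSnd (nerveMap f) ((muMap K).comp ((nerveMap π).comp π'))).fiber σ'')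
        (B : (pbSnd (nerveMap (pbSnd (nerveMap f) π)) π').fiber σ''),
        ((fun r : PB (nerveMap f) ((muMap K).comp ((nerveMap π).comp π')) =>
            (((r.1.1 : Γ.Face) : Set V), r.1.2)) '' A.1 =
          (fun r : PB (nerveMap (pbSnd (nerveMap f) π)) π' =>
            ((⋃ s ∈ ((r.1.1 : (pullback (nerveMap f) π).Face) :
                Set (PB (nerveMap f) π)), ((s.1.1 : Γ.Face) : Set V)), r.1.2)) '' B.1) →
        (q2.dist σ'' hσ'').1 A = (q3.dist σ'' hσ'').1 B) := by
  refine ⟨⟨p.pushforward π, piPushSpec_pushforward hf.2.2 p π⟩, ?_⟩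
  intro q hq q₂ hq₂ q₃ hq₃ σ'' hσ'' A B hAB
  have hunion : (fiberUnion f _ A).1 = (fiberUnion f π (fiberUnion _ π' B)).1 := by
    have := congrArg (fun S => ⋃ w ∈ S, (w : Set V × V'').1) hAB
    simpa only [Set.biUnion_image, fiberUnion_coe, Set.biUnion_iUnion] using this
  rw [hq₂.dist_apply, hq₃.dist_apply, hq.dist_apply]
  exact p.dist_apply_congr (Map.unionImage_kleisli π π' σ'') _ _ hunion

/-- the push-forward of an empirical model along a type I
morphism is a well-defined empirical model on the pulled-back bundle, and
push-forward is compatible with Kleisli composition of simplicial relations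
(under the canonical identification of the two iterated pull-backs). -/
theorem statement_9 {V : Type u} {W : Type v} {V' : Type w} {V'' : Type t}
    {Γ : SComplex V} {K : SComplex W} {K' : SComplex V'} {K'' : SComplex V''}
    (f : Map Γ K) (hf : f.IsBundle)
    (R : Type*) [CommSemiring R] (hR : ∀ a b : R, a + b = 0 → a = 0 ∧ b = 0)
    (p : EmpiricalModel R f) (π : Map K' (nerveC K)) (π' : Map K'' (nerveC K')) :
    (∃ q : EmpiricalModel R (pbSnd (nerveMap f) π), piPushSpec f π p q) ∧
    (∀ q : EmpiricalModel R (pbSnd (nerveMap f) π), piPushSpec f π p q →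
      ∀ q2 : EmpiricalModel R (pbSnd (nerveMap f) ((muMap K).comp ((nerveMap π).comp π'))),
        piPushSpec f ((muMap K).comp ((nerveMap π).comp π')) p q2 →
      ∀ q3 : EmpiricalModel R (pbSnd (nerveMap (pbSnd (nerveMap f) π)) π'),
        piPushSpec (pbSnd (nerveMap f) π) π' q q3 →
      ∀ σ'' (hσ'' : σ'' ∈ K''.faces)
        (A : (pbSnd (nerveMap f) ((muMap K).comp ((nerveMap π).comp π'))).fiber σ'')
        (B : (pbSnd (nerveMap (pbSnd (nerveMap f) π)) π').fiber σ''),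
        ((fun r : PB (nerveMap f) ((muMap K).comp ((nerveMap π).comp π')) =>
            (((r.1.1 : Γ.Face) : Set V), r.1.2)) '' A.1 =
          (fun r : PB (nerveMap (pbSnd (nerveMap f) π)) π' =>
            ((⋃ s ∈ ((r.1.1 : (pullback (nerveMap f) π).Face) :
                Set (PB (nerveMap f) π)), ((s.1.1 : Γ.Face) : Set V)), r.1.2)) '' B.1) →
        (q2.dist σ'' hσ'').1 A = (q3.dist σ'' hσ'').1 B) :=
  statement_9_general f hf R p π π'

end Ctx
end

section
/- Let f: Γ → Σ and g: Γ' → Σ be bundle scenarios, α: Γ → Γ' a simplicial complex map with g ∘ α = f, and p an empirical model on f. Then the family (α_*p)_σ := D_R(α|_{f⁻¹(σ)})(p_σ), σ ∈ Σ, is an empirical model on g. Moreover, if h: Γ'' → Σ is a bundle scenario and α': Γ' → Γ'' satisfies h ∘ α' = g, then (α' ∘ α)_* p = α'_*(α_* p). -/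
universe u v w t

/-!
Pushing forward along `α` commutes with restriction because `α` lies over the base:
the part of `α(γ)` over `σ'` is `α '' γ ∩ g⁻¹ σ' = α '' (γ ∩ f⁻¹ σ')`, the image of the
part of `γ` over `σ'`. Compatibility of `α_* p` is then that of `p` transported by the
functoriality of `D_R`, and `(α' ∘ α)_* = α'_* ∘ α_*` is functoriality of `D_R` and of images.
-/

namespace Ctx

theorem Dist.map_map_s10 {R : Type*} [CommSemiring R] {U U' U'' : Type*}
    (k₁ : U → U') (k₂ : U' → U'') (p : Dist R U) :
    Dist.map k₂ (Dist.map k₁ p) = Dist.map (k₂ ∘ k₁) p :=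
  Subtype.ext Finsupp.mapDomain_comp.symm

namespace SComplex

variable {V : Type u} {V' : Type w} {V'' : Type t} {W : Type v}
  {Γ : SComplex V} {Γ' : SComplex V'} {Γ'' : SComplex V''} {K : SComplex W}
  {f : Map Γ K} {g : Map Γ' K} {h : Map Γ'' K}

theorem resFiber_pushFiber (α : Map Γ Γ') (hα : g.comp α = f) {σ σ' : Set W}
    (hσ' : σ' ∈ K.faces) (hsub : σ' ⊆ σ) (γ : f.fiber σ) :
    g.resFiber hσ' hsub (pushFiber f g α hα σ γ) =
      pushFiber f g α hα σ' (f.resFiber hσ' hsub γ) := by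
  subst hα
  exact Subtype.ext (Set.image_inter_preimage α.toFun γ.1 (g.toFun ⁻¹' σ')).symm

theorem pushFiber_comp (α : Map Γ Γ') (α' : Map Γ' Γ'') (hα : g.comp α = f)
    (hα' : h.comp α' = g) (hαα' : h.comp (α'.comp α) = f) (σ : Set W) (γ : f.fiber σ) :
    pushFiber f h (α'.comp α) hαα' σ γ = pushFiber g h α' hα' σ (pushFiber f g α hα σ γ) :=
  Subtype.ext (Set.image_comp α'.toFun α.toFun γ.1)

namespace EmpiricalModel

variable {R : Type*} [CommSemiring R]

theorem ext {p q : EmpiricalModel R f} (hpq : ∀ σ hσ, p.dist σ hσ = q.dist σ hσ) :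
    p = q := by
  cases p
  cases q
  congr
  funext σ hσ
  exact hpq σ hσ

noncomputable def push (α : Map Γ Γ') (hα : g.comp α = f) (p : EmpiricalModel R f) :
    EmpiricalModel R g where
  dist σ hσ := Dist.map (pushFiber f g α hα σ) (p.dist σ hσ)
  compat σ hσ σ' hσ' hsub := by
    rw [Dist.map_map_s10, ← p.compat σ hσ σ' hσ' hsub, Dist.map_map_s10]
    exact congrArg (Dist.map · _) (funext (resFiber_pushFiber α hα hσ' hsub))

theorem push_comp (α : Map Γ Γ') (α' : Map Γ' Γ'') (hα : g.comp α = f)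
    (hα' : h.comp α' = g) (hαα' : h.comp (α'.comp α) = f) (p : EmpiricalModel R f) :
    p.push (α'.comp α) hαα' = (p.push α hα).push α' hα' := by
  refine ext fun σ hσ => ?_
  dsimp only [push]
  rw [Dist.map_map_s10]
  exact congrArg (Dist.map · _) (funext (pushFiber_comp α α' hα hα' hαα' σ))

end EmpiricalModel

end SComplex

open SComplex

theorem statement_10_general {V : Type u} {V' : Type w} {V'' : Type t} {W : Type v}
    {Γ : SComplex V} {Γ' : SComplex V'} {Γ'' : SComplex V''} {K : SComplex W}
    (f : Map Γ K) (g : Map Γ' K) (h : Map Γ'' K)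
    (α : Map Γ Γ') (α' : Map Γ' Γ'')
    (hα : g.comp α = f) (hα' : h.comp α' = g) (hαα' : h.comp (α'.comp α) = f)
    (R : Type*) [CommSemiring R]
    (p : EmpiricalModel R f) :
    (∀ σ (hσ : σ ∈ K.faces) σ' (hσ' : σ' ∈ K.faces) (hsub : σ' ⊆ σ),
      Dist.map (g.resFiber hσ' hsub) (Dist.map (pushFiber f g α hα σ) (p.dist σ hσ)) =
        Dist.map (pushFiber f g α hα σ') (p.dist σ' hσ')) ∧
    (∀ σ (hσ : σ ∈ K.faces),
      Dist.map (pushFiber f h (α'.comp α) hαα' σ) (p.dist σ hσ) =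
        Dist.map (pushFiber g h α' hα' σ) (Dist.map (pushFiber f g α hα σ) (p.dist σ hσ))) :=
  ⟨(p.push α hα).compat, fun σ hσ =>
    congrArg (fun q : EmpiricalModel R h => q.dist σ hσ) (p.push_comp α α' hα hα' hαα')⟩

/-- push-forward of empirical models along type II morphisms is
well defined and functorial. -/
theorem statement_10 {V : Type u} {V' : Type w} {V'' : Type t} {W : Type v}
    {Γ : SComplex V} {Γ' : SComplex V'} {Γ'' : SComplex V''} {K : SComplex W}
    (f : Map Γ K) (g : Map Γ' K) (h : Map Γ'' K)
    (hf : f.IsBundle) (hg : g.IsBundle) (hh : h.IsBundle)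
    (α : Map Γ Γ') (α' : Map Γ' Γ'')
    (hα : g.comp α = f) (hα' : h.comp α' = g) (hαα' : h.comp (α'.comp α) = f)
    (R : Type*) [CommSemiring R] (hR : ∀ a b : R, a + b = 0 → a = 0 ∧ b = 0)
    (p : EmpiricalModel R f) :
    (∀ σ (hσ : σ ∈ K.faces) σ' (hσ' : σ' ∈ K.faces) (hsub : σ' ⊆ σ),
      Dist.map (g.resFiber hσ' hsub) (Dist.map (pushFiber f g α hα σ) (p.dist σ hσ)) =
        Dist.map (pushFiber f g α hα σ') (p.dist σ' hσ')) ∧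
    (∀ σ (hσ : σ ∈ K.faces),
      Dist.map (pushFiber f h (α'.comp α) hαα' σ) (p.dist σ hσ) =
        Dist.map (pushFiber g h α' hα' σ) (Dist.map (pushFiber f g α hα σ) (p.dist σ hσ))) :=
  statement_10_general f g h α α' hα hα' hαα' R p

end Ctx
end

section
/- If f: Γ → Σ is a bundle scenario of simplicial complexes, then the induced map of nerve spaces Nf: NΓ → NΣ is a simplicial scenario: it is surjective in every degree, it has the right lifting property with respect to every coface map d^i: Δ[n-1] → Δ[n], and it has the right lifting property with respect to every codegeneracy map s^j: Δ[n] → Δ[n-1]. -/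
universe u v w t

namespace Ctx

open CategoryTheory SComplex

/-! ### Simplicial sets: the nerve space of a simplicial complex -/

/-- The commutative monoid of subsets of `V` under union (with unit `∅`). -/
def UM (V : Type u) : Type u := Set V

namespace UM

/-- View an element of the union monoid as a set. -/
def toSet {V : Type u} (a : UM V) : Set V := a

/-- View a set as an element of the union monoid. -/
def ofSet {V : Type u} (a : Set V) : UM V := a

end UM

instance {V : Type u} : Monoid (UM V) where
  mul a b := UM.ofSet (a.toSet ∪ b.toSet)
  one := UM.ofSet ∅
  mul_assoc a b c := Set.union_assoc _ _ _
  one_mul := Set.empty_union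
  mul_one := Set.union_empty

@[simp] lemma UM.toSet_mul {V : Type u} (a b : UM V) :
    (a * b).toSet = a.toSet ∪ b.toSet := rfl

@[simp] lemma UM.toSet_one {V : Type u} : (1 : UM V).toSet = (∅ : Set V) := rfl

/-- The nerve of the one-object category on the union monoid: the ambient
simplicial set whose `n`-simplices are `n`-tuples of subsets of `V` (recorded
as a composable sequence of arrows). -/
def B (V : Type u) : SSet.{u} := nerve (SingleObj (UM V))

/-- The total subset (the "union of the entries") of a simplex of `B V`:
the value of the corresponding functor on the morphism `0 ⟶ last`. -/
def totM {V : Type u} {Δ : SimplexCategoryᵒᵖ} (x : (B V).obj Δ) : UM V :=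
  x.map (homOfLE (Fin.zero_le (Fin.last Δ.unop.len)))

/-- The total subset of a simplex of `B V`, as a set. -/
def tot {V : Type u} {Δ : SimplexCategoryᵒᵖ} (x : (B V).obj Δ) : Set V :=
  (totM x).toSet

lemma tot_whisker_subset {V : Type u} {m n : ℕ} (g : Fin (m + 1) ⥤ Fin (n + 1))
    (x : ComposableArrows (SingleObj (UM V)) n) :
    UM.toSet ((x.whiskerLeft g).map (homOfLE (Fin.zero_le (Fin.last m))))
      ⊆ UM.toSet (x.map (homOfLE (Fin.zero_le (Fin.last n)))) := by
  intro a ha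
  have comp_eq : homOfLE (Fin.zero_le (Fin.last n))
      = homOfLE (Fin.zero_le (g.obj 0)) ≫
          (g.map (homOfLE (Fin.zero_le (Fin.last m))) ≫
            homOfLE (Fin.le_last (g.obj (Fin.last m)))) :=
    Subsingleton.elim _ _
  have e : x.map (homOfLE (Fin.zero_le (Fin.last n)))
      = x.map (homOfLE (Fin.zero_le (g.obj 0))) ≫
          (x.map (g.map (homOfLE (Fin.zero_le (Fin.last m)))) ≫
            x.map (homOfLE (Fin.le_last (g.obj (Fin.last m))))) := by
    rw [comp_eq, x.map_comp, x.map_comp]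
  have ha' : a ∈ UM.toSet (x.map (g.map (homOfLE (Fin.zero_le (Fin.last m))))) := ha
  rw [e, SingleObj.comp_as_mul, SingleObj.comp_as_mul, UM.toSet_mul, UM.toSet_mul]
  exact Or.inl (Or.inr ha')

lemma tot_map_subset {V : Type u} {Δ Δ' : SimplexCategoryᵒᵖ} (θ : Δ ⟶ Δ')
    (x : (B V).obj Δ) : tot ((B V).map θ x) ⊆ tot x :=
  tot_whisker_subset (SimplexCategory.toCat.map θ.unop).toFunctor x

/-- The nerve space `N K` of a simplicial complex `K`: the simplicial subset
of `B V` consisting of the tuples of subsets whose union is empty or a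
simplex of `K`.  (Each entry is then automatically empty or a simplex.) -/
def NC {V : Type u} (K : SComplex V) : SSet.{u} where
  obj Δ := {x : (B V).obj Δ // tot x = ∅ ∨ tot x ∈ K.faces}
  map θ := TypeCat.ofHom fun x => ⟨(B V).map θ x.1, by
    rcases x.2 with h | h
    · left
      have hsub := tot_map_subset θ x.1
      rw [h] at hsub
      exact Set.subset_empty_iff.mp hsub
    · by_cases h0 : tot ((B V).map θ x.1) = ∅
      · exact Or.inl h0
      · exact Or.inr (K.down_closed h (tot_map_subset θ x.1)
          (Set.nonempty_iff_ne_empty.mpr h0))⟩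
  map_id Δ := by
    refine ConcreteCategory.hom_ext _ _ fun x => ?_
    exact Subtype.ext (ConcreteCategory.congr_hom ((B V).map_id Δ) x.1)
  map_comp θ θ' := by
    refine ConcreteCategory.hom_ext _ _ fun x => ?_
    exact Subtype.ext (ConcreteCategory.congr_hom ((B V).map_comp θ θ') x.1)

/-- The map of ambient simplicial sets induced by a monoid homomorphism of
union monoids. -/
def inducedB {V W : Type u} (h : UM V →* UM W) : B V ⟶ B W where
  app Δ := TypeCat.ofHom fun x => x ⋙ (SingleObj.mapHom (UM V) (UM W)) h
  naturality Δ Δ' θ := rfl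

lemma totM_inducedB {V W : Type u} (h : UM V →* UM W) {Δ : SimplexCategoryᵒᵖ}
    (x : (B V).obj Δ) : totM ((inducedB h).app Δ x) = h (totM x) := rfl

/-- The map of nerve spaces induced by a monoid homomorphism of union monoids
carrying faces to faces. -/
def inducedNC {V W : Type u} {Γ : SComplex V} {K : SComplex W} (h : UM V →* UM W)
    (hh : ∀ σ : Set V, σ ∈ Γ.faces → (h (UM.ofSet σ)).toSet ∈ K.faces) :
    NC Γ ⟶ NC K where
  app Δ := TypeCat.ofHom fun x => ⟨(inducedB h).app Δ x.1, by
    rcases x.2 with h0 | hfc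
    · left
      have h1 : totM x.1 = 1 := h0
      show (totM ((inducedB h).app Δ x.1)).toSet = ∅
      rw [totM_inducedB, h1, map_one]
      rfl
    · right
      exact hh (tot x.1) hfc⟩
  naturality Δ Δ' θ := by
    refine ConcreteCategory.hom_ext _ _ fun x => ?_
    exact Subtype.ext rfl

/-- The image monoid homomorphism of union monoids induced by a function. -/
def imageHom {V W : Type u} (f : V → W) : UM V →* UM W where
  toFun a := UM.ofSet (f '' a.toSet)
  map_one' := congrArg UM.ofSet (Set.image_empty f)
  map_mul' a b := congrArg UM.ofSet (Set.image_union f a.toSet b.toSet)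

/-- The map of nerve spaces `N f : N Γ → N K` induced by a simplicial complex
map `f : Γ → K`, applying `f` termwise (with `f(∅) = ∅`). -/
def NMap {V W : Type u} {Γ : SComplex V} {K : SComplex W} (f : Map Γ K) :
    NC Γ ⟶ NC K :=
  inducedNC (imageHom f.toFun) (fun _ hσ => f.map_faces hσ)

/-- The union monoid homomorphism induced by a simplicial relation
`π : K' → ĤN K`. -/
def relHom {V' W : Type u} {K' : SComplex V'} {K : SComplex W}
    (π : Map K' (nerveC K)) : UM V' →* UM W where
  toFun a := UM.ofSet (⋃ x ∈ a.toSet, ((π.toFun x : K.Face) : Set W))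
  map_one' := congrArg UM.ofSet (by simp [UM.toSet, UM.ofSet])
  map_mul' a b := congrArg UM.ofSet (Set.biUnion_union a.toSet b.toSet _)

/-- The map of nerve spaces `T(π) : N K' → N K` induced by a simplicial
relation `π : K' → ĤN K`, applying `σ ↦ π̄(σ)` termwise. -/
def Tmap {V' W : Type u} {K' : SComplex V'} {K : SComplex W}
    (π : Map K' (nerveC K)) : NC K' ⟶ NC K :=
  inducedNC (relHom π) (fun σ hσ => by
    have h2 := (π.map_faces hσ).2.2
    rwa [Set.biUnion_image] at h2)

/-! ### Distributions on simplicial sets -/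

/-- The distribution functor on the category of types. -/
noncomputable def DistF (R : Type u) [CommSemiring R] : Type u ⥤ Type u where
  obj U := Dist R U
  map g := TypeCat.ofHom fun p => Dist.map g p
  map_id U := by
    refine ConcreteCategory.hom_ext _ _ fun p => ?_
    exact Subtype.ext Finsupp.mapDomain_id
  map_comp g g' := by
    refine ConcreteCategory.hom_ext _ _ fun p => ?_
    exact Subtype.ext (Finsupp.mapDomain_comp (v := p.1) (f := ⇑(ConcreteCategory.hom g))
      (g := ⇑(ConcreteCategory.hom g')))

/-- The Dirac natural transformation `δ_X : X → D_R X`. -/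
noncomputable def diracN (R : Type u) [CommSemiring R] (X : SSet.{u}) :
    X ⟶ X ⋙ DistF R where
  app Δ := TypeCat.ofHom fun x => Dist.pure x
  naturality Δ Δ' θ := by
    refine ConcreteCategory.hom_ext _ _ fun x => ?_
    exact Subtype.ext (Finsupp.mapDomain_single).symm

/-- A simplicial distribution on a simplicial set map `f : E → X`:
a simplicial set map `p : X → D_R E` with `D_R f ∘ p = δ_X`. -/
noncomputable def SDist (R : Type u) [CommSemiring R] {E X : SSet.{u}} (f : E ⟶ X) :
    Type u :=
  {p : X ⟶ E ⋙ DistF R // p ≫ Functor.whiskerRight f (DistF R) = diracN R X}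

/-- Sections of a simplicial set map. -/
def SSetSection {E X : SSet.{u}} (f : E ⟶ X) : Type u := {s : X ⟶ E // s ≫ f = 𝟙 X}

/-- Noncontextuality of a simplicial distribution: it is a mixture of the
deterministic distributions coming from sections, i.e. it is in the image of
`Θ : D_R(sections of f) → sDist(f)`. -/
noncomputable def SSetNC (R : Type u) [CommSemiring R] {E X : SSet.{u}} (f : E ⟶ X)
    (q : SDist R f) : Prop :=
  ∃ d : Dist R (SSetSection f), ∀ (Δ : SimplexCategoryᵒᵖ) (x : X.obj Δ),
    q.1.app Δ x = Dist.map (fun s : SSetSection f => s.1.app Δ x) d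

/-- The defining property of the simplicial distribution `N p` on `N f`
associated to an empirical model `p` on a bundle scenario `f`:
its value on an `n`-simplex `(σ₁,…,σₙ)` of `N K` at `(γ₁,…,γₙ)` is
`p_{σ₁∪⋯∪σₙ}(γ₁∪⋯∪γₙ)` when `(N f)(γ⃗) = σ⃗` and the union is nonempty,
is `0` when `(N f)(γ⃗) ≠ σ⃗`, and is the Dirac distribution at the tuple of
empty sets when all the `σᵢ` are empty. -/
def NpSpec {V W : Type u} {Γ : SComplex V} {K : SComplex W} (f : Map Γ K)
    (R : Type u) [CommSemiring R] (p : EmpiricalModel R f)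
    (q : NC K ⟶ NC Γ ⋙ DistF R) : Prop :=
  (∀ (Δ : SimplexCategoryᵒᵖ) (x : (NC K).obj Δ) (y : (NC Γ).obj Δ),
      (NMap f).app Δ y = x →
      ∀ (hu : tot x.1 ∈ K.faces) (γ : f.fiber (tot x.1)),
        (γ : Set V) = tot y.1 → (q.app Δ x).1 y = (p.dist _ hu).1 γ) ∧
  (∀ (Δ : SimplexCategoryᵒᵖ) (x : (NC K).obj Δ) (y : (NC Γ).obj Δ),
      (NMap f).app Δ y ≠ x → (q.app Δ x).1 y = 0) ∧
  (∀ (Δ : SimplexCategoryᵒᵖ) (x : (NC K).obj Δ), tot x.1 = ∅ →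
      ∀ y : (NC Γ).obj Δ, tot y.1 = ∅ → q.app Δ x = Dist.pure y)

/-- The `i`-th edge of an `n`-simplex of a nerve space. -/
def edgeN {V : Type u} {K : SComplex V} {n : ℕ} (i : Fin n)
    (x : (NC K).obj (Opposite.op (SimplexCategory.mk n))) :
    (NC K).obj (Opposite.op (SimplexCategory.mk 1)) :=
  (NC K).map (SimplexCategory.mkOfSucc i).op x

end Ctx

/-! A lifting problem for `N f` against a simplicial operator `θ` asks, given `y` with
`N f (y) = θ^* x`, for `z` over `x` with `θ^* z = y`. Writing `⋃` for the union of the entries,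
local surjectivity (surjectivity when `⋃ y = ∅`) gives a simplex `γ` of `Γ` with `f γ = ⋃ x` and
`⋃ y ⊆ γ`, and `z` is obtained by replacing each entry `σ` of `x` by `γ ∩ f⁻¹ σ`. Discreteness
over vertices makes `f` injective on `γ`, hence `N f` injective on simplices supported in `γ`,
which forces `θ^* z = y`. -/

namespace Ctx
open CategoryTheory SComplex

section NerveSpace

variable {V W : Type u}

lemma B_ext {Δ : SimplexCategoryᵒᵖ} {x y : (B V).obj Δ}
    (h : ∀ (i j : Fin (Δ.unop.len + 1)) (a : i ⟶ j), (x.map a).toSet = (y.map a).toSet) :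
    x = y :=
  CategoryTheory.Functor.ext (fun _ => rfl) fun i j a => by
    simp only [eqToHom_refl, Category.id_comp, Category.comp_id]; exact h i j a

lemma toSet_map_subset_tot {Δ : SimplexCategoryᵒᵖ} (x : (B V).obj Δ)
    {i j : Fin (Δ.unop.len + 1)} (a : i ⟶ j) :
    (x.map a).toSet ⊆ tot x := by
  have hfactor : homOfLE (Fin.zero_le (Fin.last Δ.unop.len)) =
      homOfLE (Fin.zero_le i) ≫ a ≫ homOfLE (Fin.le_last j) := Subsingleton.elim _ _
  intro v hv
  change v ∈ (x.map (homOfLE (Fin.zero_le (Fin.last Δ.unop.len)))).toSet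
  rw [hfactor, x.map_comp, x.map_comp, SingleObj.comp_as_mul, SingleObj.comp_as_mul,
    UM.toSet_mul, UM.toSet_mul]
  exact Or.inl (Or.inr hv)

end NerveSpace

lemma SComplex.Map.DiscV.injOn_s12 {V W : Type*} {Γ : SComplex V} {K : SComplex W} {f : Map Γ K}
    (hd : f.DiscV) {γ : Set V} (hγ : γ = ∅ ∨ γ ∈ Γ.faces) : Set.InjOn f.toFun γ := by
  rcases hγ with rfl | hγ
  · exact Set.injOn_empty _
  intro v hv w hw hvw
  by_contra hne
  exact hd v w hne hvw (Γ.down_closed hγ (Set.insert_subset hv (Set.singleton_subset_iff.2 hw))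
    (Set.insert_nonempty _ _))

def preimageHom {V W : Type u} (g : V → W) (A : Set V) : UM W →* UM V where
  toFun σ := UM.ofSet (A ∩ g ⁻¹' σ.toSet)
  map_one' := congrArg UM.ofSet (by rw [UM.toSet_one, Set.preimage_empty, Set.inter_empty])
  map_mul' a b := congrArg UM.ofSet (by
    rw [UM.toSet_mul, Set.preimage_union, Set.inter_union_distrib_left]; rfl)

section Lifting

variable {V W : Type u} {Γ : SComplex V} {K : SComplex W}

lemma exists_NMap_eq_of_image_eq_tot (f : Map Γ K) {Δ : SimplexCategoryᵒᵖ}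
    (x : (NC K).obj Δ) {γ : Set V} (hγ : γ = ∅ ∨ γ ∈ Γ.faces)
    (himage : f.toFun '' γ = tot x.1) :
    ∃ y : (NC Γ).obj Δ, (NMap f).app Δ y = x ∧ tot y.1 = γ := by
  let y := (inducedB (preimageHom f.toFun γ)).app Δ x.1
  have hy : tot y = γ := by
    change γ ∩ f.toFun ⁻¹' tot x.1 = γ
    rw [← himage]
    exact Set.inter_eq_left.2 (Set.subset_preimage_image _ _)
  refine ⟨⟨y, hy ▸ hγ⟩, Subtype.ext (B_ext fun i j a => ?_), hy⟩
  change f.toFun '' (γ ∩ f.toFun ⁻¹' (x.1.map a).toSet) = (x.1.map a).toSet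
  rw [Set.image_inter_preimage, himage]
  exact Set.inter_eq_right.2 (toSet_map_subset_tot x.1 a)

lemma NMap_injOn (f : Map Γ K) {Δ : SimplexCategoryᵒᵖ} {γ : Set V}
    (hinj : Set.InjOn f.toFun γ) {y₁ y₂ : (NC Γ).obj Δ}
    (h₁ : tot y₁.1 ⊆ γ) (h₂ : tot y₂.1 ⊆ γ) (h : (NMap f).app Δ y₁ = (NMap f).app Δ y₂) :
    y₁ = y₂ :=
  Subtype.ext <| B_ext fun _ _ a =>
    (hinj.image_eq_image_iff ((toSet_map_subset_tot y₁.1 a).trans h₁)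
      ((toSet_map_subset_tot y₂.1 a).trans h₂)).1
      (congrArg (fun z : (NC K).obj Δ => (z.1.map a).toSet) h)

lemma SComplex.Map.Surj.exists_image_eq_tot {f : Map Γ K} (hs : f.Surj)
    {Δ : SimplexCategoryᵒᵖ} (x : (NC K).obj Δ) :
    ∃ γ : Set V, (γ = ∅ ∨ γ ∈ Γ.faces) ∧ f.toFun '' γ = tot x.1 := by
  rcases x.2 with hx | hx
  · exact ⟨∅, Or.inl rfl, by rw [Set.image_empty, hx]⟩
  · obtain ⟨γ, hγ, himage⟩ := hs _ hx
    exact ⟨γ, Or.inr hγ, himage⟩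

lemma SComplex.Map.IsBundle.exists_image_eq_tot_of_subset {f : Map Γ K} (hf : f.IsBundle)
    {Δ Δ' : SimplexCategoryᵒᵖ} (x : (NC K).obj Δ) (y : (NC Γ).obj Δ')
    (hyx : f.toFun '' tot y.1 ⊆ tot x.1) :
    ∃ γ : Set V, (γ = ∅ ∨ γ ∈ Γ.faces) ∧ f.toFun '' γ = tot x.1 ∧ tot y.1 ⊆ γ := by
  rcases y.2 with hy | hy
  · obtain ⟨γ, hγ, himage⟩ := hf.1.exists_image_eq_tot x
    exact ⟨γ, hγ, himage, hy.le.trans (Set.empty_subset γ)⟩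
  rcases x.2 with hx | hx
  · exact absurd (Set.subset_empty_iff.1 (hyx.trans hx.le))
      ((Γ.nonempty_mem _ hy).image _).ne_empty
  obtain ⟨γ, ⟨hγ, hyγ⟩, himage⟩ := hf.2.1 _ hy _ ⟨hx, hyx⟩
  exact ⟨γ, Or.inr hγ, himage, hyγ⟩

lemma SComplex.Map.IsBundle.exists_lift_NMap {f : Map Γ K} (hf : f.IsBundle)
    {m n : SimplexCategory} (θ : m ⟶ n)
    (y : (NC Γ).obj (Opposite.op m)) (x : (NC K).obj (Opposite.op n))
    (h : (NMap f).app _ y = (NC K).map θ.op x) :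
    ∃ z : (NC Γ).obj (Opposite.op n), (NC Γ).map θ.op z = y ∧ (NMap f).app _ z = x := by
  have hyx : f.toFun '' tot y.1 ⊆ tot x.1 := by
    change tot ((NMap f).app _ y).1 ⊆ tot x.1
    rw [h]
    exact tot_map_subset θ.op x.1
  obtain ⟨γ, hγ, himage, hyγ⟩ := hf.exists_image_eq_tot_of_subset x y hyx
  obtain ⟨z, hz, hzγ⟩ := exists_NMap_eq_of_image_eq_tot f x hγ himage
  refine ⟨z, NMap_injOn f (hf.2.2.injOn_s12 hγ) ((tot_map_subset θ.op z.1).trans hzγ.le) hyγ ?_, hz⟩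
  rw [h, ← hz]
  exact ConcreteCategory.congr_hom ((NMap f).naturality θ.op) z

end Lifting

lemma SSet.hasLiftingProperty_stdSimplex_map_of_exists {E X : SSet.{u}} (p : E ⟶ X)
    {m n : SimplexCategory} (θ : m ⟶ n)
    (H : ∀ (y : E.obj (Opposite.op m)) (x : X.obj (Opposite.op n)),
      p.app _ y = X.map θ.op x → ∃ z : E.obj (Opposite.op n), E.map θ.op z = y ∧ p.app _ z = x) :
    HasLiftingProperty (SSet.stdSimplex.map θ) p where
  sq_hasLift {u} {v} sq := by
    obtain ⟨z, hzu, hzv⟩ := H (SSet.yonedaEquiv u) (SSet.yonedaEquiv v) (by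
      rw [← SSet.yonedaEquiv_comp, sq.w, SSet.yonedaEquiv_naturality])
    refine ⟨⟨⟨SSet.yonedaEquiv.symm z, ?_, ?_⟩⟩⟩
    · rw [SSet.yonedaEquiv_symm_naturality_left, hzu, Equiv.symm_apply_apply]
    · rw [← Equiv.apply_eq_iff_eq SSet.yonedaEquiv, SSet.yonedaEquiv_comp,
        Equiv.apply_symm_apply, hzv]

/-- the nerve space map of a bundle scenario is a simplicial
scenario: surjective in every degree, with the right lifting property with
respect to all coface maps (local surjectivity) and all codegeneracy maps
(discreteness over vertices). -/
theorem statement_12 {V W : Type u} {Γ : SComplex V} {K : SComplex W}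
    (f : Map Γ K) (hf : f.IsBundle) :
    (∀ Δ : SimplexCategoryᵒᵖ, Function.Surjective ((NMap f).app Δ)) ∧
    (∀ (n : ℕ) (i : Fin (n + 2)),
      HasLiftingProperty (SSet.stdSimplex.map (SimplexCategory.δ i)) (NMap f)) ∧
    (∀ (n : ℕ) (j : Fin (n + 1)),
      HasLiftingProperty (SSet.stdSimplex.map (SimplexCategory.σ j)) (NMap f)) := by
  refine ⟨fun Δ x => ?_, fun n i => ?_, fun n j => ?_⟩
  · obtain ⟨γ, hγ, himage⟩ := hf.1.exists_image_eq_tot x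
    obtain ⟨y, hy, -⟩ := exists_NMap_eq_of_image_eq_tot f x hγ himage
    exact ⟨y, hy⟩
  · exact SSet.hasLiftingProperty_stdSimplex_map_of_exists _ _ (hf.exists_lift_NMap _)
  · exact SSet.hasLiftingProperty_stdSimplex_map_of_exists _ _ (hf.exists_lift_NMap _)

end Ctx
end
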